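/- arXiv:2604.20058 — 7 statements merged into one kernel-verified Lean document; each statement's English description precedes it below -/
import Mathlib

section
/- For any initial data U₀ ∈ ℝ³, every solution u = (u₁,u₂,u₃) of the Lorenz system u₁' = -σu₁ + σu₂, u₂' = -σu₁ - u₂ - u₁u₃, u₃' = -bu₃ + u₁u₂ - b(ρ+σ) satisfies, for all t ≥ 0, ‖u(t)‖² ≤ e^{-2αt}‖U₀‖² + b(ρ+σ)²/(2α), where α = min{σ, 1, b/2} and ‖·‖ is the Euclidean norm on ℝ³. -/
/-!
The energy `E = u₁² + u₂² + u₃²` satisfies `E' = -2σu₁² - 2u₂² - 2bu₃² - 2b(ρ+σ)u₃`, since the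
quadratic terms of the vector field are skew (`u₁u₂u₃` cancels). Completing the square in `u₃`
gives `E' ≤ -2αE + b(ρ+σ)²`, and Grönwall's inequality integrates this differential inequality.
-/

open Real

theorem le_exp_mul_add_of_hasDerivAt_le {f f' : ℝ → ℝ} {l c : ℝ} (hl : 0 < l) (hc : 0 ≤ c)
    (hf : ∀ t, HasDerivAt f (f' t) t) (bound : ∀ t, f' t ≤ -l * f t + c) {t : ℝ} (ht : 0 ≤ t) :
    f t ≤ exp (-l * t) * f 0 + c / l := by
  have hgronwall := le_gronwallBound_of_liminf_deriv_right_le (f' := f') (δ := f 0)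
    (fun s _ => (hf s).continuousAt.continuousWithinAt)
    (fun s _ _ hr => (hf s).hasDerivWithinAt.liminf_right_slope_le hr) le_rfl
    (fun s _ => bound s) t ⟨ht, le_rfl⟩
  rw [gronwallBound_of_K_ne_0 (neg_ne_zero.mpr hl.ne'), sub_zero] at hgronwall
  have hcorrection : 0 ≤ c / l * exp (-l * t) := by positivity
  calc f t ≤ f 0 * exp (-l * t) + c / -l * (exp (-l * t) - 1) := hgronwall
    _ = exp (-l * t) * f 0 + c / l - c / l * exp (-l * t) := by rw [div_neg]; ring
    _ ≤ exp (-l * t) * f 0 + c / l := by linarith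

theorem lorenz_energy_hasDerivAt {σ b ρ : ℝ} {u₁ u₂ u₃ : ℝ → ℝ} {t : ℝ}
    (h₁ : HasDerivAt u₁ (-σ * u₁ t + σ * u₂ t) t)
    (h₂ : HasDerivAt u₂ (-σ * u₁ t - u₂ t - u₁ t * u₃ t) t)
    (h₃ : HasDerivAt u₃ (-b * u₃ t + u₁ t * u₂ t - b * (ρ + σ)) t) :
    HasDerivAt (fun s => u₁ s ^ 2 + u₂ s ^ 2 + u₃ s ^ 2)
      (-2 * σ * u₁ t ^ 2 - 2 * u₂ t ^ 2 - 2 * b * u₃ t ^ 2 - 2 * b * (ρ + σ) * u₃ t) t :=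
  ((h₁.pow 2).add (h₂.pow 2) |>.add (h₃.pow 2)).congr_deriv (by ring)

theorem lorenz_dissipation_le {σ b c α x y z : ℝ} (hb : 0 ≤ b) (hασ : α ≤ σ)
    (hα1 : α ≤ 1) (hαb : α ≤ b / 2) :
    -2 * σ * x ^ 2 - 2 * y ^ 2 - 2 * b * z ^ 2 - 2 * b * c * z ≤
      -(2 * α) * (x ^ 2 + y ^ 2 + z ^ 2) + b * c ^ 2 := by
  have hsquare : -2 * b * z ^ 2 - 2 * b * c * z ≤ -b * z ^ 2 + b * c ^ 2 := by
    nlinarith [mul_nonneg hb (sq_nonneg (z + c))]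
  nlinarith [sq_nonneg x, sq_nonneg y, sq_nonneg z]

theorem lorenz_absorbing_ball_general
    (σ b ρ : ℝ) (hσ : 0 < σ) (hb : 0 < b)
    (u₁ u₂ u₃ : ℝ → ℝ) (U₁ U₂ U₃ : ℝ)
    (h₁ : ∀ t : ℝ, HasDerivAt u₁ (-σ * u₁ t + σ * u₂ t) t)
    (h₂ : ∀ t : ℝ, HasDerivAt u₂ (-σ * u₁ t - u₂ t - u₁ t * u₃ t) t)
    (h₃ : ∀ t : ℝ, HasDerivAt u₃ (-b * u₃ t + u₁ t * u₂ t - b * (ρ + σ)) t)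
    (hU₁ : u₁ 0 = U₁) (hU₂ : u₂ 0 = U₂) (hU₃ : u₃ 0 = U₃) :
    ∀ t : ℝ, 0 ≤ t →
      u₁ t ^ 2 + u₂ t ^ 2 + u₃ t ^ 2 ≤
        Real.exp (-2 * min σ (min 1 (b / 2)) * t) * (U₁ ^ 2 + U₂ ^ 2 + U₃ ^ 2)
          + b * (ρ + σ) ^ 2 / (2 * min σ (min 1 (b / 2))) := by
  intro t ht
  set α := min σ (min 1 (b / 2))
  have hα : 0 < α := lt_min hσ (lt_min one_pos (half_pos hb))
  have hbound := le_exp_mul_add_of_hasDerivAt_le (by positivity) (by positivity)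
    (fun s => lorenz_energy_hasDerivAt (h₁ s) (h₂ s) (h₃ s))
    (fun s => lorenz_dissipation_le hb.le (min_le_left _ _)
      ((min_le_right _ _).trans (min_le_left _ _)) ((min_le_right _ _).trans (min_le_right _ _)))
    ht
  simpa only [neg_mul, hU₁, hU₂, hU₃] using hbound

/-- absorbing-ball estimate for the shifted Lorenz 1963 system. -/
theorem lorenz_absorbing_ball
    (σ b ρ : ℝ) (hσ : 0 < σ) (hb : 0 < b) (hρ : 0 < ρ)
    (u₁ u₂ u₃ : ℝ → ℝ) (U₁ U₂ U₃ : ℝ)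
    (h₁ : ∀ t : ℝ, HasDerivAt u₁ (-σ * u₁ t + σ * u₂ t) t)
    (h₂ : ∀ t : ℝ, HasDerivAt u₂ (-σ * u₁ t - u₂ t - u₁ t * u₃ t) t)
    (h₃ : ∀ t : ℝ, HasDerivAt u₃ (-b * u₃ t + u₁ t * u₂ t - b * (ρ + σ)) t)
    (hU₁ : u₁ 0 = U₁) (hU₂ : u₂ 0 = U₂) (hU₃ : u₃ 0 = U₃) :
    ∀ t : ℝ, 0 ≤ t →
      u₁ t ^ 2 + u₂ t ^ 2 + u₃ t ^ 2 ≤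
        Real.exp (-2 * min σ (min 1 (b / 2)) * t) * (U₁ ^ 2 + U₂ ^ 2 + U₃ ^ 2)
          + b * (ρ + σ) ^ 2 / (2 * min σ (min 1 (b / 2))) :=
  lorenz_absorbing_ball_general σ b ρ hσ hb u₁ u₂ u₃ U₁ U₂ U₃ h₁ h₂ h₃ hU₁ hU₂ hU₃
end

section
/- Let δ̃ = u - ṽ be the error of the backward-nudged Lorenz system on [0,T] with terminal data δ̃(T), where u is a reference Lorenz solution with ‖u(t)‖ ≤ K. For any η > 0, if μ̃₁ ≥ σ + K²/2 + K²/(4η) and μ̃₂ ≥ 1 + K²/2, then ‖δ̃(0)‖² ≤ ‖δ̃(T)‖² e^{2(b+η)T}. -/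
/-!
Multiplying the error equations by `δ̃ = u - ṽ`, the cubic terms of the quadratic nonlinearity
cancel and what remains of it is `δ̃₁ (u₂ δ̃₃ - u₃ δ̃₂)`. Young's inequality bounds this by
`K² δ̃₁² / (4η) + η (δ̃₂² + δ̃₃²)`; the gain `μ̃₁` absorbs the first term and the extra rate `η`
the second, so that `d/dt ‖δ̃‖² ≥ -2 (b + η) ‖δ̃‖²`. Hence `‖δ̃(t)‖² e^{2(b+η)t}` is nondecreasing on `[0, T]`.
-/

open Real Set

theorem le_mul_exp_of_neg_mul_le_deriv {E E' : ℝ → ℝ} {a b c : ℝ} (hab : a ≤ b)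
    (hE : ∀ t ∈ Icc a b, HasDerivAt E (E' t) t) (hE' : ∀ t ∈ Icc a b, -c * E t ≤ E' t) :
    E a ≤ E b * exp (c * (b - a)) := by
  have hF : ∀ t ∈ Icc a b, HasDerivAt (fun s => E s * exp (c * s))
      ((E' t + c * E t) * exp (c * t)) t := fun t ht => by
    have hexp : HasDerivAt (fun s => exp (c * s)) (exp (c * t) * c) t := by
      simpa using ((hasDerivAt_id t).const_mul c).exp
    exact ((hE t ht).mul hexp).congr_deriv (by ring)
  have hmono : MonotoneOn (fun s => E s * exp (c * s)) (Icc a b) :=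
    monotoneOn_of_hasDerivWithinAt_nonneg (convex_Icc a b)
      (fun t ht => (hF t ht).continuousAt.continuousWithinAt)
      (fun t ht => (hF t (interior_subset ht)).hasDerivWithinAt)
      (fun t ht => mul_nonneg (by linarith [hE' t (interior_subset ht)]) (exp_pos _).le)
  have hab' := hmono (left_mem_Icc.2 hab) (right_mem_Icc.2 hab) hab
  rw [mul_sub, exp_sub, mul_div_assoc', le_div_iff₀ (exp_pos _)]
  exact hab'

theorem lorenz_nudged_error_energy_identity (σ b μ₁ μ₂ u₁ u₂ u₃ w₁ w₂ w₃ : ℝ) :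
    (u₁ - w₁) * (-σ * (u₁ - w₁) + σ * (u₂ - w₂) + μ₁ * (u₁ - w₁))
      + (u₂ - w₂) * (-σ * (u₁ - w₁) - (u₂ - w₂) - u₁ * u₃ + w₁ * w₃ + μ₂ * (u₂ - w₂))
      + (u₃ - w₃) * (-b * (u₃ - w₃) + u₁ * u₂ - w₁ * w₂)
    = (μ₁ - σ) * (u₁ - w₁) ^ 2 + (μ₂ - 1) * (u₂ - w₂) ^ 2 - b * (u₃ - w₃) ^ 2
      + (u₁ - w₁) * (u₂ * (u₃ - w₃) - u₃ * (u₂ - w₂)) := by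
  ring

theorem neg_le_mul_sub_mul {η : ℝ} (hη : 0 < η) (x y₂ y₃ v₂ v₃ : ℝ) :
    -((v₂ ^ 2 + v₃ ^ 2) / (4 * η) * x ^ 2 + η * (y₂ ^ 2 + y₃ ^ 2)) ≤
      x * (v₂ * y₃ - v₃ * y₂) := by
  have hsq : 0 ≤ (v₂ * x + 2 * η * y₃) ^ 2 + (v₃ * x - 2 * η * y₂) ^ 2 := by positivity
  rw [neg_le, ← sub_nonneg]
  field_simp
  nlinarith [hsq]

theorem lorenz_nudged_error_dissipation {σ b μ₁ μ₂ η K u₂ u₃ : ℝ} (hb : 0 ≤ b) (hη : 0 < η)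
    (hμ₁ : σ + K ^ 2 / (4 * η) ≤ μ₁) (hμ₂ : 1 ≤ μ₂) (hu : u₂ ^ 2 + u₃ ^ 2 ≤ K ^ 2)
    (δ₁ δ₂ δ₃ : ℝ) :
    -(b + η) * (δ₁ ^ 2 + δ₂ ^ 2 + δ₃ ^ 2) ≤
      (μ₁ - σ) * δ₁ ^ 2 + (μ₂ - 1) * δ₂ ^ 2 - b * δ₃ ^ 2 + δ₁ * (u₂ * δ₃ - u₃ * δ₂) := by
  have hyoung := neg_le_mul_sub_mul hη δ₁ δ₂ δ₃ u₂ u₃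
  have hgain : (u₂ ^ 2 + u₃ ^ 2) / (4 * η) * δ₁ ^ 2 ≤ (μ₁ - σ) * δ₁ ^ 2 := by
    gcongr
    calc (u₂ ^ 2 + u₃ ^ 2) / (4 * η) ≤ K ^ 2 / (4 * η) := by gcongr
      _ ≤ μ₁ - σ := by linarith
  linarith [mul_nonneg (sub_nonneg.2 hμ₂) (sq_nonneg δ₂), mul_nonneg hb (sq_nonneg δ₁),
    mul_nonneg hb (sq_nonneg δ₂), mul_nonneg hη.le (sq_nonneg δ₁)]

theorem lorenz_backward_nudging_growth_general
    (σ b : ℝ) (hb : 0 < b)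
    (μ₁' μ₂' : ℝ)
    (T K η : ℝ) (hT : 0 ≤ T) (hη : 0 < η)
    (u₁ u₂ u₃ w₁ w₂ w₃ : ℝ → ℝ)
    -- error equations in (forward) time t for δ̃ = u - ṽ, where ṽ = (w₁,w₂,w₃)
    -- solves the backward-nudged system with terminal condition at t = T
    (hd₁ : ∀ t ∈ Set.Icc (0 : ℝ) T,
      HasDerivAt (fun s => u₁ s - w₁ s)
        (-σ * (u₁ t - w₁ t) + σ * (u₂ t - w₂ t) + μ₁' * (u₁ t - w₁ t)) t)
    (hd₂ : ∀ t ∈ Set.Icc (0 : ℝ) T,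
      HasDerivAt (fun s => u₂ s - w₂ s)
        (-σ * (u₁ t - w₁ t) - (u₂ t - w₂ t) - u₁ t * u₃ t + w₁ t * w₃ t
          + μ₂' * (u₂ t - w₂ t)) t)
    (hd₃ : ∀ t ∈ Set.Icc (0 : ℝ) T,
      HasDerivAt (fun s => u₃ s - w₃ s)
        (-b * (u₃ t - w₃ t) + u₁ t * u₂ t - w₁ t * w₂ t) t)
    -- uniform bound on the reference solution
    (hu : ∀ t ∈ Set.Icc (0 : ℝ) T, u₁ t ^ 2 + u₂ t ^ 2 + u₃ t ^ 2 ≤ K ^ 2)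
    (hμ₁ : μ₁' ≥ σ + K ^ 2 / 2 + K ^ 2 / (4 * η))
    (hμ₂ : μ₂' ≥ 1 + K ^ 2 / 2) :
    (u₁ 0 - w₁ 0) ^ 2 + (u₂ 0 - w₂ 0) ^ 2 + (u₃ 0 - w₃ 0) ^ 2 ≤
      ((u₁ T - w₁ T) ^ 2 + (u₂ T - w₂ T) ^ 2 + (u₃ T - w₃ T) ^ 2) *
        Real.exp (2 * (b + η) * T) := by
  have hK₂ : 0 ≤ K ^ 2 / 2 := by positivity
  have hμ₁' : σ + K ^ 2 / (4 * η) ≤ μ₁' := by linarith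
  have hμ₂' : 1 ≤ μ₂' := by linarith
  have henergy : ∀ t ∈ Icc 0 T,
      HasDerivAt (fun s => (u₁ s - w₁ s) ^ 2 + (u₂ s - w₂ s) ^ 2 + (u₃ s - w₃ s) ^ 2)
        (2 * ((μ₁' - σ) * (u₁ t - w₁ t) ^ 2 + (μ₂' - 1) * (u₂ t - w₂ t) ^ 2
          - b * (u₃ t - w₃ t) ^ 2
          + (u₁ t - w₁ t) * (u₂ t * (u₃ t - w₃ t) - u₃ t * (u₂ t - w₂ t)))) t := fun t ht =>
    (((hd₁ t ht).pow 2).add ((hd₂ t ht).pow 2)).add ((hd₃ t ht).pow 2) |>.congr_deriv <| by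
      linear_combination 2 * lorenz_nudged_error_energy_identity σ b μ₁' μ₂'
        (u₁ t) (u₂ t) (u₃ t) (w₁ t) (w₂ t) (w₃ t)
  simpa using le_mul_exp_of_neg_mul_le_deriv (c := 2 * (b + η)) hT henergy fun t ht => by
    linarith [lorenz_nudged_error_dissipation (u₂ := u₂ t) (u₃ := u₃ t) hb.le hη hμ₁' hμ₂'
      (by linarith [hu t ht, sq_nonneg (u₁ t)]) (u₁ t - w₁ t) (u₂ t - w₂ t) (u₃ t - w₃ t)]

/-- backward growth estimate for the backward-nudged Lorenz error
system `δ̃ = u - ṽ`. -/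
theorem lorenz_backward_nudging_growth
    (σ b ρ : ℝ) (hσ : 0 < σ) (hb : 0 < b) (hρ : 0 < ρ)
    (μ₁' μ₂' : ℝ) (hμ₁0 : 0 ≤ μ₁') (hμ₂0 : 0 ≤ μ₂')
    (T K η : ℝ) (hT : 0 ≤ T) (hK : 0 ≤ K) (hη : 0 < η)
    (u₁ u₂ u₃ w₁ w₂ w₃ : ℝ → ℝ)
    -- error equations in (forward) time t for δ̃ = u - ṽ, where ṽ = (w₁,w₂,w₃)
    -- solves the backward-nudged system with terminal condition at t = T
    (hd₁ : ∀ t ∈ Set.Icc (0 : ℝ) T,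
      HasDerivAt (fun s => u₁ s - w₁ s)
        (-σ * (u₁ t - w₁ t) + σ * (u₂ t - w₂ t) + μ₁' * (u₁ t - w₁ t)) t)
    (hd₂ : ∀ t ∈ Set.Icc (0 : ℝ) T,
      HasDerivAt (fun s => u₂ s - w₂ s)
        (-σ * (u₁ t - w₁ t) - (u₂ t - w₂ t) - u₁ t * u₃ t + w₁ t * w₃ t
          + μ₂' * (u₂ t - w₂ t)) t)
    (hd₃ : ∀ t ∈ Set.Icc (0 : ℝ) T,
      HasDerivAt (fun s => u₃ s - w₃ s)
        (-b * (u₃ t - w₃ t) + u₁ t * u₂ t - w₁ t * w₂ t) t)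
    -- uniform bound on the reference solution
    (hu : ∀ t ∈ Set.Icc (0 : ℝ) T, u₁ t ^ 2 + u₂ t ^ 2 + u₃ t ^ 2 ≤ K ^ 2)
    (hμ₁ : μ₁' ≥ σ + K ^ 2 / 2 + K ^ 2 / (4 * η))
    (hμ₂ : μ₂' ≥ 1 + K ^ 2 / 2) :
    (u₁ 0 - w₁ 0) ^ 2 + (u₂ 0 - w₂ 0) ^ 2 + (u₃ 0 - w₃ 0) ^ 2 ≤
      ((u₁ T - w₁ T) ^ 2 + (u₂ T - w₂ T) ^ 2 + (u₃ T - w₃ T) ^ 2) *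
        Real.exp (2 * (b + η) * T) :=
  lorenz_backward_nudging_growth_general σ b hb μ₁' μ₂' T K η hT hη u₁ u₂ u₃ w₁ w₂ w₃ hd₁ hd₂ hd₃ hu
    hμ₁ hμ₂
end

section
/- For the 1D heat equation on the torus with forcing f, consider the BFN iteration observing the first M Fourier modes with forward gain μ > 0 and backward gain μ̃ > 0. If the error w = u - v has Fourier coefficients ŵ(k,t), then after one complete forward-backward cycle, ŵ(k,0) is multiplied by e^{-(μ+μ̃)T} if |k| ≤ M and is unchanged if |k| > M. -/
/-!
Each Fourier mode of the error solves a scalar linear ODE, so it evolves by an exponential: forward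
over `[0, T]` with rate `a`, then backward from `T` to `0` with rate `b`, giving the factor
`exp ((a - b) T)`. The diffusion terms of the two rates cancel, leaving `-(μ + μ') T` on the
observed modes `|k| ≤ M` and `0` on the others.
-/

open Complex

theorem eq_exp_mul_of_hasDerivAt_mul_self {c : ℂ} {f : ℝ → ℂ}
    (hf : ∀ t, HasDerivAt f (c * f t) t) (s t : ℝ) :
    f t = exp (c * (t - s)) * f s := by
  have hconst : ∀ x, HasDerivAt (fun x : ℝ => exp (-c * x) * f x) 0 x := by
    intro x
    have hexp : HasDerivAt (fun x : ℝ => exp (-c * x)) (exp (-c * x) * -c) x := by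
      simpa using ((hasDerivAt_id x).ofReal_comp.const_mul (-c)).cexp
    have h := hexp.mul (hf x)
    rwa [show exp (-c * x) * -c * f x + exp (-c * x) * (c * f x) = 0 by ring] at h
  have hst : exp (-c * t) * f t = exp (-c * s) * f s :=
    is_const_of_deriv_eq_zero (fun x => (hconst x).differentiableAt) (fun x => (hconst x).deriv) t s
  calc f t = exp (c * t) * (exp (-c * t) * f t) := by
        rw [← mul_assoc, ← exp_add]; simp
    _ = exp (c * (t - s)) * f s := by
        rw [hst, ← mul_assoc, ← exp_add]; ring_nf

theorem eq_exp_mul_of_forward_backward {a b : ℂ} {f g : ℝ → ℂ}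
    (hf : ∀ t, HasDerivAt f (a * f t) t) (hg : ∀ t, HasDerivAt g (b * g t) t)
    {T : ℝ} (hfg : g T = f T) :
    g 0 = exp ((a - b) * T) * f 0 := by
  rw [eq_exp_mul_of_hasDerivAt_mul_self hg T 0, hfg, eq_exp_mul_of_hasDerivAt_mul_self hf 0 T,
    ← mul_assoc, ← exp_add]
  push_cast
  ring_nf

theorem heat_BFN_one_cycle_fourier_general
    (ν L T μ μ' : ℝ)
    (M : ℕ)
    (w w' : ℤ → ℝ → ℂ)
    -- forward error modes: ŵ' = (-ν(2πk/L)² - μ χ_{|k|≤M}) ŵ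
    (hfwd : ∀ k : ℤ, ∀ t : ℝ,
      HasDerivAt (w k)
        ((((-ν * (2 * Real.pi * (k : ℝ) / L) ^ 2
            - μ * (if |k| ≤ (M : ℤ) then (1 : ℝ) else 0)) : ℝ) : ℂ) * w k t) t)
    -- backward error modes: ŵ̃(t) = e^{(ν(2πk/L)² - μ̃ χ)(T-t)} ŵ̃(T), i.e.
    -- d/dt ŵ̃ = -(ν(2πk/L)² - μ̃ χ) ŵ̃
    (hbwd : ∀ k : ℤ, ∀ t : ℝ,
      HasDerivAt (w' k)
        (((-(ν * (2 * Real.pi * (k : ℝ) / L) ^ 2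
            - μ' * (if |k| ≤ (M : ℤ) then (1 : ℝ) else 0)) : ℝ) : ℂ) * w' k t) t)
    -- interface condition at time T
    (hglue : ∀ k : ℤ, w' k T = w k T) :
    ∀ k : ℤ,
      w' k 0 = (if |k| ≤ (M : ℤ)
        then (Real.exp (-(μ + μ') * T) : ℂ) else 1) * w k 0 := by
  intro k
  rw [eq_exp_mul_of_forward_backward (hfwd k) (hbwd k) (hglue k)]
  split_ifs
  · push_cast
    ring_nf
  · push_cast
    ring_nf
    simp

/-- for the 1D periodic heat equation BFN iteration observing the
first `M` Fourier modes, after one complete forward-backward cycle the Fourier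
coefficient `ŵ(k,0)` of the error is multiplied by `e^{-(μ+μ̃)T}` when
`|k| ≤ M` and is unchanged when `|k| > M`. -/
theorem heat_BFN_one_cycle_fourier
    (ν L T μ μ' : ℝ) (hν : 0 < ν) (hL : 0 < L) (hT : 0 < T)
    (hμ : 0 < μ) (hμ' : 0 < μ')
    (M : ℕ)
    (w w' : ℤ → ℝ → ℂ)
    -- forward error modes: ŵ' = (-ν(2πk/L)² - μ χ_{|k|≤M}) ŵ
    (hfwd : ∀ k : ℤ, ∀ t : ℝ,
      HasDerivAt (w k)
        ((((-ν * (2 * Real.pi * (k : ℝ) / L) ^ 2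
            - μ * (if |k| ≤ (M : ℤ) then (1 : ℝ) else 0)) : ℝ) : ℂ) * w k t) t)
    -- backward error modes: ŵ̃(t) = e^{(ν(2πk/L)² - μ̃ χ)(T-t)} ŵ̃(T), i.e.
    -- d/dt ŵ̃ = -(ν(2πk/L)² - μ̃ χ) ŵ̃
    (hbwd : ∀ k : ℤ, ∀ t : ℝ,
      HasDerivAt (w' k)
        (((-(ν * (2 * Real.pi * (k : ℝ) / L) ^ 2
            - μ' * (if |k| ≤ (M : ℤ) then (1 : ℝ) else 0)) : ℝ) : ℂ) * w' k t) t)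
    -- interface condition at time T
    (hglue : ∀ k : ℤ, w' k T = w k T) :
    ∀ k : ℤ,
      w' k 0 = (if |k| ≤ (M : ℤ)
        then (Real.exp (-(μ + μ') * T) : ℂ) else 1) * w k 0 :=
  heat_BFN_one_cycle_fourier_general ν L T μ μ' M w w' hfwd hbwd hglue
end

section
/- Let u₀ be a trigonometric polynomial of degree K and let u(t) solve the heat equation u_t = ν u_{xx} + f on the torus. Let (vⁿ, ṽⁿ) be the BFN iterates observing modes |k| ≤ M, initialized with a trigonometric polynomial v₀ of degree K. Then limₙ→∞ ‖vⁿ(0) - u₀‖_{L²} = ‖Q_M(v₀ - u₀)‖_{L²}, where Q_M = I - P_M; i.e., the error in unobserved modes is invariant across all BFN iterations while the observed error tends to zero. -/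
/-!
The Fourier modes decouple. On mode `k` the forward error `vⁿ - u` solves
`e' = (λₖ - μ χₖ) e` and the backward error `ṽⁿ - u` solves `e' = (λₖ + μ̃ χₖ) e`, where
`χₖ = 1` exactly for observed modes. Running forward over `[0, T]` and back again cancels the
diffusion factor `exp (λₖ T)` and leaves `exp (-(μ + μ̃) χₖ T)`: observed errors contract
geometrically, unobserved ones come back unchanged.
-/

open Filter Complex

theorem eq_cexp_mul_of_hasDerivAt_mul {c : ℂ} {y : ℝ → ℂ}
    (hy : ∀ t, HasDerivAt y (c * y t) t) (t : ℝ) :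
    y t = exp (c * t) * y 0 := by
  have hconst : ∀ s : ℝ, HasDerivAt (fun s : ℝ => exp (-(c * s)) * y s) 0 s := by
    intro s
    have hlin : HasDerivAt (fun s : ℝ => -(c * (s : ℂ))) (-c) s :=
      (((ofRealCLM.hasDerivAt (x := s)).const_mul c).neg).congr_deriv (by simp)
    exact (hlin.cexp.mul (hy s)).congr_deriv (by ring)
  have key : exp (-(c * t)) * y t = exp (-(c * 0)) * y 0 :=
    is_const_of_deriv_eq_zero (fun s => (hconst s).differentiableAt)
      (fun s => (hconst s).deriv) t 0
  calc y t = exp (c * t) * (exp (-(c * t)) * y t) := by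
        rw [← mul_assoc, ← exp_add, add_neg_cancel, exp_zero, one_mul]
    _ = exp (c * t) * y 0 := by rw [key]; simp

section BFNMode

variable {c f : ℂ} {α β T : ℝ} {a : ℝ → ℂ}

theorem bfn_mode_sweep_error {v w : ℝ → ℂ}
    (ha : ∀ t, HasDerivAt a (c * a t + f) t)
    (hv : ∀ t, HasDerivAt v (c * v t + (α : ℂ) * (a t - v t) + f) t)
    (hw : ∀ t, HasDerivAt w (c * w t - (β : ℂ) * (a t - w t) + f) t)
    (hglue : w T = v T) :
    w 0 - a 0 = (Real.exp (-(α + β) * T) : ℂ) * (v 0 - a 0) := by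
  have hv_err : ∀ t, v t - a t = exp ((c - α) * t) * (v 0 - a 0) :=
    eq_cexp_mul_of_hasDerivAt_mul fun t => ((hv t).sub (ha t)).congr_deriv (by ring)
  have hw_err : ∀ t, w t - a t = exp ((c + β) * t) * (w 0 - a 0) :=
    eq_cexp_mul_of_hasDerivAt_mul fun t => ((hw t).sub (ha t)).congr_deriv (by ring)
  have hmatch : exp ((c + β) * T) * (w 0 - a 0) = exp ((c - α) * T) * (v 0 - a 0) := by
    rw [← hw_err, ← hv_err, hglue]
  calc w 0 - a 0 = exp (-((c + β) * T)) * (exp ((c + β) * T) * (w 0 - a 0)) := by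
        rw [← mul_assoc, ← exp_add, neg_add_cancel, exp_zero, one_mul]
    _ = (Real.exp (-(α + β) * T) : ℂ) * (v 0 - a 0) := by
        rw [hmatch, ← mul_assoc, ← exp_add]
        push_cast
        ring_nf

theorem bfn_mode_iterate_error {v w : ℕ → ℝ → ℂ}
    (ha : ∀ t, HasDerivAt a (c * a t + f) t)
    (hv : ∀ n t, HasDerivAt (v n) (c * v n t + (α : ℂ) * (a t - v n t) + f) t)
    (hw : ∀ n t, HasDerivAt (w n) (c * w n t - (β : ℂ) * (a t - w n t) + f) t)
    (hglue₁ : ∀ n, w n T = v n T) (hglue₂ : ∀ n, v (n + 1) 0 = w n 0) (n : ℕ) :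
    v n 0 - a 0 = (Real.exp (-(α + β) * T) : ℂ) ^ n * (v 0 0 - a 0) := by
  induction n with
  | zero => simp
  | succ n ih =>
    rw [hglue₂, bfn_mode_sweep_error ha (hv n) (hw n) (hglue₁ n), ih, pow_succ, mul_assoc,
      mul_left_comm]

end BFNMode

theorem tendsto_pow_mul_nhds_zero_of_real_exp {r : ℝ} (hr : r < 0) (z : ℂ) :
    Tendsto (fun n : ℕ => (Real.exp r : ℂ) ^ n * z) atTop (nhds 0) := by
  have hlt : ‖(Real.exp r : ℂ)‖ < 1 := by
    rw [norm_real, Real.norm_of_nonneg (Real.exp_nonneg r)]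
    exact Real.exp_lt_one_iff.mpr hr
  simpa using (tendsto_pow_atTop_nhds_zero_of_norm_lt_one hlt).mul_const z

theorem heat_BFN_iterates_limit_general
    (ν L T μ μ' : ℝ) (hT : 0 < T)
    (hμ : 0 < μ) (hμ' : 0 < μ')
    (M K : ℕ) (fhat : ℤ → ℂ)
    (a : ℤ → ℝ → ℂ) (v w : ℕ → ℤ → ℝ → ℂ)
    -- the reference solution modes: â' = -ν(2πk/L)² â + f̂
    (ha : ∀ k : ℤ, ∀ t : ℝ,
      HasDerivAt (a k)
        (((-ν * (2 * Real.pi * (k : ℝ) / L) ^ 2 : ℝ) : ℂ) * a k t + fhat k) t)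
    -- forward nudged iterates: v̂' = -ν(2πk/L)² v̂ + μ χ_{|k|≤M}(â - v̂) + f̂
    (hv : ∀ n : ℕ, ∀ k : ℤ, ∀ t : ℝ,
      HasDerivAt (v n k)
        (((-ν * (2 * Real.pi * (k : ℝ) / L) ^ 2 : ℝ) : ℂ) * v n k t
          + ((μ * (if |k| ≤ (M : ℤ) then (1 : ℝ) else 0) : ℝ) : ℂ)
              * (a k t - v n k t) + fhat k) t)
    -- backward nudged iterates: ŵ' = -ν(2πk/L)² ŵ - μ̃ χ_{|k|≤M}(â - ŵ) + f̂
    (hw : ∀ n : ℕ, ∀ k : ℤ, ∀ t : ℝ,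
      HasDerivAt (w n k)
        (((-ν * (2 * Real.pi * (k : ℝ) / L) ^ 2 : ℝ) : ℂ) * w n k t
          - ((μ' * (if |k| ≤ (M : ℤ) then (1 : ℝ) else 0) : ℝ) : ℂ)
              * (a k t - w n k t) + fhat k) t)
    -- BFN gluing: ṽⁿ(T) = vⁿ(T) and vⁿ⁺¹(0) = ṽⁿ(0)
    (hglue₁ : ∀ n : ℕ, ∀ k : ℤ, w n k T = v n k T)
    (hglue₂ : ∀ n : ℕ, ∀ k : ℤ, v (n + 1) k 0 = w n k 0) :
    Tendsto
      (fun n : ℕ => Real.sqrt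
        (∑ k ∈ Finset.Icc (-(K : ℤ)) (K : ℤ), ‖v n k 0 - a k 0‖ ^ 2))
      atTop
      (nhds (Real.sqrt
        (∑ k ∈ (Finset.Icc (-(K : ℤ)) (K : ℤ)).filter (fun k => (M : ℤ) < |k|),
          ‖v 0 k 0 - a k 0‖ ^ 2))) := by
  have hmode : ∀ k : ℤ, Tendsto (fun n : ℕ => ‖v n k 0 - a k 0‖ ^ 2) atTop
      (nhds (if (M : ℤ) < |k| then ‖v 0 k 0 - a k 0‖ ^ 2 else 0)) := by
    intro k
    have herr := bfn_mode_iterate_error (ha k) (hv · k) (hw · k) (hglue₁ · k) (hglue₂ · k)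
    by_cases hk : (M : ℤ) < |k|
    · simp only [if_neg (not_le.mpr hk), if_pos hk, mul_zero, add_zero, neg_zero, zero_mul,
        Real.exp_zero, ofReal_one, one_pow, one_mul] at herr ⊢
      exact tendsto_const_nhds.congr fun n => by rw [herr n]
    · simp only [if_pos (not_lt.mp hk), if_neg hk, mul_one] at herr ⊢
      have hrate : -(μ + μ') * T < 0 := by nlinarith
      have hlim := (tendsto_pow_mul_nhds_zero_of_real_exp hrate (v 0 k 0 - a k 0)).norm.pow 2
      rw [norm_zero, zero_pow two_ne_zero] at hlim
      exact hlim.congr fun n => by rw [herr n]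
  rw [Finset.sum_filter]
  exact (tendsto_finsetSum _ fun k _ => hmode k).sqrt

/-- for the 1D periodic heat equation with trigonometric-polynomial
data (of degree `K`), written mode-by-mode in Fourier space, the BFN iterates
`vⁿ` satisfy `‖vⁿ(0) - u₀‖ → ‖Q_M(v₀ - u₀)‖`: the observed error tends to zero
while the error in the unobserved modes is invariant. Here `a k t`, `v n k t`,
`w n k t` denote the Fourier coefficients of `u(t)`, `vⁿ(t)`, `ṽⁿ(t)`, and
`fhat` gives the coefficients of the forcing `f`. -/
theorem heat_BFN_iterates_limit
    (ν L T μ μ' : ℝ) (hν : 0 < ν) (hL : 0 < L) (hT : 0 < T)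
    (hμ : 0 < μ) (hμ' : 0 < μ')
    (M K : ℕ) (fhat : ℤ → ℂ)
    (a : ℤ → ℝ → ℂ) (v w : ℕ → ℤ → ℝ → ℂ)
    -- the reference solution modes: â' = -ν(2πk/L)² â + f̂
    (ha : ∀ k : ℤ, ∀ t : ℝ,
      HasDerivAt (a k)
        (((-ν * (2 * Real.pi * (k : ℝ) / L) ^ 2 : ℝ) : ℂ) * a k t + fhat k) t)
    -- u₀ is a trigonometric polynomial of degree K
    (haK : ∀ k : ℤ, (K : ℤ) < |k| → a k 0 = 0)
    -- so is the initialization v₀ = v 0 (·) 0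
    (hvK : ∀ k : ℤ, (K : ℤ) < |k| → v 0 k 0 = 0)
    -- forward nudged iterates: v̂' = -ν(2πk/L)² v̂ + μ χ_{|k|≤M}(â - v̂) + f̂
    (hv : ∀ n : ℕ, ∀ k : ℤ, ∀ t : ℝ,
      HasDerivAt (v n k)
        (((-ν * (2 * Real.pi * (k : ℝ) / L) ^ 2 : ℝ) : ℂ) * v n k t
          + ((μ * (if |k| ≤ (M : ℤ) then (1 : ℝ) else 0) : ℝ) : ℂ)
              * (a k t - v n k t) + fhat k) t)
    -- backward nudged iterates: ŵ' = -ν(2πk/L)² ŵ - μ̃ χ_{|k|≤M}(â - ŵ) + f̂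
    (hw : ∀ n : ℕ, ∀ k : ℤ, ∀ t : ℝ,
      HasDerivAt (w n k)
        (((-ν * (2 * Real.pi * (k : ℝ) / L) ^ 2 : ℝ) : ℂ) * w n k t
          - ((μ' * (if |k| ≤ (M : ℤ) then (1 : ℝ) else 0) : ℝ) : ℂ)
              * (a k t - w n k t) + fhat k) t)
    -- BFN gluing: ṽⁿ(T) = vⁿ(T) and vⁿ⁺¹(0) = ṽⁿ(0)
    (hglue₁ : ∀ n : ℕ, ∀ k : ℤ, w n k T = v n k T)
    (hglue₂ : ∀ n : ℕ, ∀ k : ℤ, v (n + 1) k 0 = w n k 0) :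
    Tendsto
      (fun n : ℕ => Real.sqrt
        (∑ k ∈ Finset.Icc (-(K : ℤ)) (K : ℤ), ‖v n k 0 - a k 0‖ ^ 2))
      atTop
      (nhds (Real.sqrt
        (∑ k ∈ (Finset.Icc (-(K : ℤ)) (K : ℤ)).filter (fun k => (M : ℤ) < |k|),
          ‖v 0 k 0 - a k 0‖ ^ 2))) :=
  heat_BFN_iterates_limit_general ν L T μ μ' hT hμ hμ' M K fhat a v w ha hv hw hglue₁ hglue₂
end

section
/- For the periodic viscous linear transport equation u_t = ν u_{xx} - a u_x with a > 0, ν ≥ 0, the Fourier coefficient of the forward-nudged error satisfies ŵ(k,t) = e^{(-νk² - μχ_M(k) - iak)t} ŵ(k,0), and the backward-nudged error satisfies ŵ̃(k,t) = e^{(νk² - μ̃χ_M(k) + iak)(T-t)} ŵ̃(k,T). Consequently, for unobserved modes |k| > M, |ŵ̃(k,0)| = |ŵ(k,0)| after one complete BFN cycle. -/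
open Complex

theorem eq_exp_mul_smul_of_hasDerivAt {E : Type*} [NormedAddCommGroup E] [NormedSpace ℂ E]
    {c : ℂ} {f : ℝ → E} (hf : ∀ t, HasDerivAt f (c • f t) t) (t s : ℝ) :
    f t = exp (c * ((t - s : ℝ) : ℂ)) • f s := by
  have hconst : ∀ r : ℝ, HasDerivAt (fun r : ℝ => exp (-c * r) • f r) 0 r := by
    intro r
    have hexp : HasDerivAt (fun r : ℝ => exp (-c * r)) (exp (-c * r) * -c) r := by
      simpa using ((hasDerivAt_id r).ofReal_comp.const_mul (-c)).cexp
    convert hexp.fun_smul (hf r) using 1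
    rw [smul_smul, ← add_smul, mul_neg, mul_comm, add_neg_cancel, zero_smul]
  have hts : exp (-c * t) • f t = exp (-c * s) • f s :=
    is_const_of_deriv_eq_zero (fun r => (hconst r).differentiableAt) (fun r => (hconst r).deriv)
      t s
  calc f t = exp (c * t) • exp (-c * t) • f t := by
        rw [smul_smul, ← exp_add, neg_mul, add_neg_cancel, exp_zero, one_smul]
    _ = exp (c * ((t - s : ℝ) : ℂ)) • f s := by
        rw [hts, smul_smul, ← exp_add]
        push_cast
        ring_nf

theorem transport_BFN_fourier_modes_general
    (ν a μ μ' T : ℝ)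
    (M : ℕ) (k : ℤ)
    (w w' : ℝ → ℂ)
    -- forward error mode: ŵ' = (-νk² - μχ_M(k) - i a k) ŵ
    (hfwd : ∀ t : ℝ,
      HasDerivAt w
        (((((-ν * (k : ℝ) ^ 2 - μ * (if |k| ≤ (M : ℤ) then (1:ℝ) else 0)) : ℝ) : ℂ)
          - Complex.I * (a : ℂ) * (k : ℂ)) * w t) t)
    -- backward error mode: ŵ̃(t) = e^{(νk² - μ̃χ + iak)(T-t)} ŵ̃(T), i.e.
    -- d/dt ŵ̃ = -(νk² - μ̃χ_M(k) + i a k) ŵ̃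
    (hbwd : ∀ t : ℝ,
      HasDerivAt w'
        (-(((((ν * (k : ℝ) ^ 2 - μ' * (if |k| ≤ (M : ℤ) then (1:ℝ) else 0)) : ℝ) : ℂ)
          + Complex.I * (a : ℂ) * (k : ℂ))) * w' t) t)
    (hglue : w' T = w T) :
    (∀ t : ℝ, w t =
      Complex.exp (((((-ν * (k : ℝ) ^ 2
          - μ * (if |k| ≤ (M : ℤ) then (1:ℝ) else 0)) : ℝ) : ℂ)
        - Complex.I * (a : ℂ) * (k : ℂ)) * (t : ℂ)) * w 0) ∧
    (∀ t : ℝ, w' t =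
      Complex.exp (((((ν * (k : ℝ) ^ 2
          - μ' * (if |k| ≤ (M : ℤ) then (1:ℝ) else 0)) : ℝ) : ℂ)
        + Complex.I * (a : ℂ) * (k : ℂ)) * ((T - t : ℝ) : ℂ)) * w' T) ∧
    ((M : ℤ) < |k| → ‖w' 0‖ = ‖w 0‖) := by
  set χ : ℝ := if |k| ≤ (M : ℤ) then 1 else 0
  set c : ℂ := ((-ν * (k : ℝ) ^ 2 - μ * χ : ℝ) : ℂ) - I * a * k
  set B : ℂ := ((ν * (k : ℝ) ^ 2 - μ' * χ : ℝ) : ℂ) + I * a * k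
  have hfwd_sol (t : ℝ) : w t = exp (c * t) * w 0 := by
    simpa using eq_exp_mul_smul_of_hasDerivAt hfwd t 0
  have hbwd_sol (t : ℝ) : w' t = exp (B * ((T - t : ℝ) : ℂ)) * w' T := by
    rw [eq_exp_mul_smul_of_hasDerivAt hbwd t T, smul_eq_mul, neg_mul, ← mul_neg, ← ofReal_neg,
      neg_sub]
  refine ⟨hfwd_sol, hbwd_sol, fun hk => ?_⟩
  -- Without nudging, the backward exponent is minus the forward one: the cycle is the identity.
  have hBc : B + c = 0 := by
    simp only [B, c, χ, if_neg (not_le.mpr hk)]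
    push_cast
    ring
  rw [hbwd_sol 0, hglue, hfwd_sol T, ← mul_assoc, ← exp_add, sub_zero, ← add_mul, hBc, zero_mul,
    exp_zero, one_mul]

/-- explicit Fourier-mode solution formulas for the nudged
forward/backward viscous linear transport errors, and invariance of the
modulus of unobserved modes (`|k| > M`) over one complete BFN cycle. Domain is
`2π`-periodic, so mode `k` has wavenumber `k`. -/
theorem transport_BFN_fourier_modes
    (ν a μ μ' T : ℝ) (hν : 0 ≤ ν) (ha : 0 < a) (hμ : 0 < μ) (hμ' : 0 < μ')
    (hT : 0 < T)
    (M : ℕ) (k : ℤ)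
    (w w' : ℝ → ℂ)
    -- forward error mode: ŵ' = (-νk² - μχ_M(k) - i a k) ŵ
    (hfwd : ∀ t : ℝ,
      HasDerivAt w
        (((((-ν * (k : ℝ) ^ 2 - μ * (if |k| ≤ (M : ℤ) then (1:ℝ) else 0)) : ℝ) : ℂ)
          - Complex.I * (a : ℂ) * (k : ℂ)) * w t) t)
    -- backward error mode: ŵ̃(t) = e^{(νk² - μ̃χ + iak)(T-t)} ŵ̃(T), i.e.
    -- d/dt ŵ̃ = -(νk² - μ̃χ_M(k) + i a k) ŵ̃
    (hbwd : ∀ t : ℝ,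
      HasDerivAt w'
        (-(((((ν * (k : ℝ) ^ 2 - μ' * (if |k| ≤ (M : ℤ) then (1:ℝ) else 0)) : ℝ) : ℂ)
          + Complex.I * (a : ℂ) * (k : ℂ))) * w' t) t)
    (hglue : w' T = w T) :
    (∀ t : ℝ, w t =
      Complex.exp (((((-ν * (k : ℝ) ^ 2
          - μ * (if |k| ≤ (M : ℤ) then (1:ℝ) else 0)) : ℝ) : ℂ)
        - Complex.I * (a : ℂ) * (k : ℂ)) * (t : ℂ)) * w 0) ∧
    (∀ t : ℝ, w' t =
      Complex.exp (((((ν * (k : ℝ) ^ 2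
          - μ' * (if |k| ≤ (M : ℤ) then (1:ℝ) else 0)) : ℝ) : ℂ)
        + Complex.I * (a : ℂ) * (k : ℂ)) * ((T - t : ℝ) : ℂ)) * w' T) ∧
    ((M : ℤ) < |k| → ‖w' 0‖ = ‖w 0‖) :=
  transport_BFN_fourier_modes_general ν a μ μ' T M k w w' hfwd hbwd hglue
end

section
/- Let v solve the forward-nudged Lorenz system v₁' = -σv₁ + σv₂ + μ₁(u₁ - v₁), v₂' = -σv₁ - v₂ - v₁v₃ + μ₂(u₂ - v₂), v₃' = -bv₃ + v₁v₂ - b(ρ+σ) on [0,T], where the observations satisfy ‖u(t)‖ ≤ K. Then ‖v(t)‖² ≤ e^{-ct}‖v(0)‖² + (b(ρ+σ)² + (μ₁+μ₂)K²)/c for all t ∈ [0,T], where c = min{2σ+μ₁, 2+μ₂, b}. -/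
/-!
Along a trajectory, the energy `E = v₁² + v₂² + v₃²` satisfies `E' ≤ -c E + M`: the quadratic
nonlinearities `-v₁v₂v₃` and `v₁v₂v₃` cancel, the `σ v₁ v₂` cross terms cancel, and Young's
inequality absorbs the nudging terms `2μᵢvᵢuᵢ ≤ μᵢ(uᵢ² + vᵢ²)` and the forcing
`2b(ρ+σ)v₃ ≤ b((ρ+σ)² + v₃²)`. Grönwall's inequality then gives the exponential bound.
-/

open Set Real

theorem le_exp_mul_add_div_of_hasDerivAt_le {E E' : ℝ → ℝ} {a b c M : ℝ} (hc : 0 < c)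
    (hM : 0 ≤ M) (hE : ∀ t ∈ Icc a b, HasDerivAt E (E' t) t)
    (bound : ∀ t ∈ Icc a b, E' t ≤ -c * E t + M) :
    ∀ t ∈ Icc a b, E t ≤ exp (-c * (t - a)) * E a + M / c := by
  intro t ht
  have h := le_gronwallBound_of_liminf_deriv_right_le (f := E) (δ := E a) (K := -c) (ε := M)
    (fun t ht => (hE t ht).continuousAt.continuousWithinAt)
    (fun t ht _ hr => (hE t (Ico_subset_Icc_self ht)).hasDerivWithinAt.liminf_right_slope_le hr)
    le_rfl (fun t ht => bound t (Ico_subset_Icc_self ht)) t ht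
  rw [gronwallBound_of_K_ne_0 (neg_ne_zero.2 hc.ne'), div_neg] at h
  have : 0 ≤ M / c * exp (-c * (t - a)) := by positivity
  linarith

theorem hasDerivAt_sq_add_sq_add_sq {v₁ v₂ v₃ : ℝ → ℝ} {d₁ d₂ d₃ t : ℝ}
    (h₁ : HasDerivAt v₁ d₁ t) (h₂ : HasDerivAt v₂ d₂ t) (h₃ : HasDerivAt v₃ d₃ t) :
    HasDerivAt (fun s => v₁ s ^ 2 + v₂ s ^ 2 + v₃ s ^ 2)
      (2 * v₁ t * d₁ + 2 * v₂ t * d₂ + 2 * v₃ t * d₃) t := by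
  refine (((h₁.fun_pow 2).add (h₂.fun_pow 2)).add (h₃.fun_pow 2)).congr_deriv ?_
  push_cast
  ring

theorem lorenz_nudged_energy_deriv_le {σ b ρ μ₁ μ₂ v₁ v₂ v₃ u₁ u₂ : ℝ} (hb : 0 ≤ b)
    (hμ₁ : 0 ≤ μ₁) (hμ₂ : 0 ≤ μ₂) :
    2 * v₁ * (-σ * v₁ + σ * v₂ + μ₁ * (u₁ - v₁))
        + 2 * v₂ * (-σ * v₁ - v₂ - v₁ * v₃ + μ₂ * (u₂ - v₂))
        + 2 * v₃ * (-b * v₃ + v₁ * v₂ - b * (ρ + σ))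
      ≤ -(2 * σ + μ₁) * v₁ ^ 2 - (2 + μ₂) * v₂ ^ 2 - b * v₃ ^ 2
        + (b * (ρ + σ) ^ 2 + μ₁ * u₁ ^ 2 + μ₂ * u₂ ^ 2) := by
  nlinarith [mul_nonneg hμ₁ (sq_nonneg (u₁ - v₁)), mul_nonneg hμ₂ (sq_nonneg (u₂ - v₂)),
    mul_nonneg hb (sq_nonneg (ρ + σ + v₃))]

theorem lorenz_nudged_energy_deriv_le_min {σ b ρ μ₁ μ₂ K v₁ v₂ v₃ u₁ u₂ : ℝ} (hb : 0 ≤ b)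
    (hμ₁ : 0 ≤ μ₁) (hμ₂ : 0 ≤ μ₂) (hu : u₁ ^ 2 + u₂ ^ 2 ≤ K ^ 2) :
    2 * v₁ * (-σ * v₁ + σ * v₂ + μ₁ * (u₁ - v₁))
        + 2 * v₂ * (-σ * v₁ - v₂ - v₁ * v₃ + μ₂ * (u₂ - v₂))
        + 2 * v₃ * (-b * v₃ + v₁ * v₂ - b * (ρ + σ))
      ≤ -min (2 * σ + μ₁) (min (2 + μ₂) b) * (v₁ ^ 2 + v₂ ^ 2 + v₃ ^ 2)
        + (b * (ρ + σ) ^ 2 + (μ₁ + μ₂) * K ^ 2) := by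
  have hc₁ : min (2 * σ + μ₁) (min (2 + μ₂) b) ≤ 2 * σ + μ₁ := min_le_left _ _
  have hc₂ : min (2 * σ + μ₁) (min (2 + μ₂) b) ≤ 2 + μ₂ :=
    (min_le_right _ _).trans (min_le_left _ _)
  have hc₃ : min (2 * σ + μ₁) (min (2 + μ₂) b) ≤ b := (min_le_right _ _).trans (min_le_right _ _)
  have hu₁ : μ₁ * u₁ ^ 2 ≤ μ₁ * K ^ 2 :=
    mul_le_mul_of_nonneg_left (by linarith [sq_nonneg u₂]) hμ₁
  have hu₂ : μ₂ * u₂ ^ 2 ≤ μ₂ * K ^ 2 :=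
    mul_le_mul_of_nonneg_left (by linarith [sq_nonneg u₁]) hμ₂
  nlinarith [lorenz_nudged_energy_deriv_le (σ := σ) (ρ := ρ) (v₁ := v₁) (v₂ := v₂) (v₃ := v₃)
      (u₁ := u₁) (u₂ := u₂) hb hμ₁ hμ₂,
    mul_le_mul_of_nonneg_right hc₁ (sq_nonneg v₁), mul_le_mul_of_nonneg_right hc₂ (sq_nonneg v₂),
    mul_le_mul_of_nonneg_right hc₃ (sq_nonneg v₃)]

theorem lorenz_forward_nudged_energy_bound_general
    (σ b ρ : ℝ) (hσ : 0 < σ) (hb : 0 < b)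
    (μ₁ μ₂ : ℝ) (hμ₁ : 0 ≤ μ₁) (hμ₂ : 0 ≤ μ₂)
    (T K : ℝ)
    (u₁ u₂ u₃ v₁ v₂ v₃ : ℝ → ℝ)
    (hu : ∀ t ∈ Set.Icc (0 : ℝ) T, u₁ t ^ 2 + u₂ t ^ 2 + u₃ t ^ 2 ≤ K ^ 2)
    (hv₁ : ∀ t ∈ Set.Icc (0 : ℝ) T,
      HasDerivAt v₁ (-σ * v₁ t + σ * v₂ t + μ₁ * (u₁ t - v₁ t)) t)
    (hv₂ : ∀ t ∈ Set.Icc (0 : ℝ) T,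
      HasDerivAt v₂ (-σ * v₁ t - v₂ t - v₁ t * v₃ t + μ₂ * (u₂ t - v₂ t)) t)
    (hv₃ : ∀ t ∈ Set.Icc (0 : ℝ) T,
      HasDerivAt v₃ (-b * v₃ t + v₁ t * v₂ t - b * (ρ + σ)) t) :
    ∀ t ∈ Set.Icc (0 : ℝ) T,
      v₁ t ^ 2 + v₂ t ^ 2 + v₃ t ^ 2 ≤
        Real.exp (-(min (2 * σ + μ₁) (min (2 + μ₂) b)) * t) *
            (v₁ 0 ^ 2 + v₂ 0 ^ 2 + v₃ 0 ^ 2)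
          + (b * (ρ + σ) ^ 2 + (μ₁ + μ₂) * K ^ 2)
              / min (2 * σ + μ₁) (min (2 + μ₂) b) := by
  have hc : 0 < min (2 * σ + μ₁) (min (2 + μ₂) b) := lt_min (by linarith) (lt_min (by linarith) hb)
  intro t ht
  simpa only [sub_zero] using le_exp_mul_add_div_of_hasDerivAt_le hc (by positivity)
    (fun s hs => hasDerivAt_sq_add_sq_add_sq (hv₁ s hs) (hv₂ s hs) (hv₃ s hs))
    (fun s hs => lorenz_nudged_energy_deriv_le_min hb.le hμ₁ hμ₂
      (by linarith [hu s hs, sq_nonneg (u₃ s)]))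
    t ht

/-- energy bound for the forward-nudged Lorenz system. -/
theorem lorenz_forward_nudged_energy_bound
    (σ b ρ : ℝ) (hσ : 0 < σ) (hb : 0 < b) (hρ : 0 < ρ)
    (μ₁ μ₂ : ℝ) (hμ₁ : 0 ≤ μ₁) (hμ₂ : 0 ≤ μ₂)
    (T K : ℝ) (hT : 0 ≤ T) (hK : 0 ≤ K)
    (u₁ u₂ u₃ v₁ v₂ v₃ : ℝ → ℝ)
    (hu_cont : Continuous u₁ ∧ Continuous u₂ ∧ Continuous u₃)
    (hu : ∀ t ∈ Set.Icc (0 : ℝ) T, u₁ t ^ 2 + u₂ t ^ 2 + u₃ t ^ 2 ≤ K ^ 2)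
    (hv₁ : ∀ t ∈ Set.Icc (0 : ℝ) T,
      HasDerivAt v₁ (-σ * v₁ t + σ * v₂ t + μ₁ * (u₁ t - v₁ t)) t)
    (hv₂ : ∀ t ∈ Set.Icc (0 : ℝ) T,
      HasDerivAt v₂ (-σ * v₁ t - v₂ t - v₁ t * v₃ t + μ₂ * (u₂ t - v₂ t)) t)
    (hv₃ : ∀ t ∈ Set.Icc (0 : ℝ) T,
      HasDerivAt v₃ (-b * v₃ t + v₁ t * v₂ t - b * (ρ + σ)) t) :
    ∀ t ∈ Set.Icc (0 : ℝ) T,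
      v₁ t ^ 2 + v₂ t ^ 2 + v₃ t ^ 2 ≤
        Real.exp (-(min (2 * σ + μ₁) (min (2 + μ₂) b)) * t) *
            (v₁ 0 ^ 2 + v₂ 0 ^ 2 + v₃ 0 ^ 2)
          + (b * (ρ + σ) ^ 2 + (μ₁ + μ₂) * K ^ 2)
              / min (2 * σ + μ₁) (min (2 + μ₂) b) :=
  lorenz_forward_nudged_energy_bound_general σ b ρ hσ hb μ₁ μ₂ hμ₁ hμ₂ T K u₁ u₂ u₃ v₁ v₂ v₃ hu hv₁
    hv₂ hv₃
end

section
/- Let ṽ solve the backward-nudged Lorenz system on [0,T] (with the signs of the nudging terms reversed and terminal condition at time T), where ‖u(t)‖ ≤ K. Then ‖ṽ(t)‖² ≤ e^{c̃(T-t)}‖ṽ(T)‖² + (b(ρ+σ)² + (μ̃₁+μ̃₂)K²)/c̃ · e^{c̃T} for all t ∈ [0,T], where c̃ = max{2σ - μ̃₁, 2 - μ̃₂, 3b} (assumed positive). -/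
/-!
The energy `E = w₁² + w₂² + w₃²` of the backward system satisfies `E' ≥ -(c̃ E + D)` with
`D = b(ρ+σ)² + (μ̃₁+μ̃₂)K²`: after completing squares, `c̃ E + D + E'` is a sum of nonnegative
terms. Hence `e^{c̃ t} (E + D / c̃)` is nondecreasing, so
`E t + D / c̃ ≤ e^{c̃ (T - t)} (E T + D / c̃)`.
-/

open Real Set

theorem add_div_le_exp_mul_of_deriv_ge {f f' : ℝ → ℝ} {a T c D : ℝ} (hc : c ≠ 0)
    (hf : ∀ t ∈ Icc a T, HasDerivAt f (f' t) t)
    (hf' : ∀ t ∈ Icc a T, -(c * f t + D) ≤ f' t) :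
    ∀ t ∈ Icc a T, f t + D / c ≤ exp (c * (T - t)) * (f T + D / c) := by
  have hG : ∀ t ∈ Icc a T, HasDerivAt (fun s ↦ exp (c * s) * (f s + D / c))
      (exp (c * t) * (c * f t + D + f' t)) t := by
    intro t ht
    have hexp : HasDerivAt (fun s ↦ exp (c * s)) (exp (c * t) * (c * 1)) t :=
      ((hasDerivAt_id t).const_mul c).exp
    refine (hexp.mul ((hf t ht).add_const (D / c))).congr_deriv ?_
    field_simp
  have hmono : MonotoneOn (fun s ↦ exp (c * s) * (f s + D / c)) (Icc a T) :=
    monotoneOn_of_hasDerivWithinAt_nonneg (convex_Icc a T)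
      (fun t ht ↦ (hG t ht).continuousAt.continuousWithinAt)
      (fun t ht ↦ (hG t (interior_subset ht)).hasDerivWithinAt)
      (fun t ht ↦ mul_nonneg (exp_pos _).le (by linarith [hf' t (interior_subset ht)]))
  intro t ht
  have hGt := hmono ht (right_mem_Icc.mpr (ht.1.trans ht.2)) ht.2
  have hsplit : exp (c * T) = exp (c * t) * exp (c * (T - t)) := by
    rw [← exp_add]; ring_nf
  simp only [hsplit, mul_assoc] at hGt
  exact le_of_mul_le_mul_left hGt (exp_pos _)

theorem lorenz_backward_energy_rate_ge {σ b ρ μ₁ μ₂ c K x y z u₁ u₂ : ℝ} (hb : 0 ≤ b)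
    (hμ₁ : 0 ≤ μ₁) (hμ₂ : 0 ≤ μ₂) (hc₁ : 2 * σ - μ₁ ≤ c) (hc₂ : 2 - μ₂ ≤ c) (hc₃ : 3 * b ≤ c)
    (hu₁ : u₁ ^ 2 ≤ K ^ 2) (hu₂ : u₂ ^ 2 ≤ K ^ 2) :
    -(c * (x ^ 2 + y ^ 2 + z ^ 2) + (b * (ρ + σ) ^ 2 + (μ₁ + μ₂) * K ^ 2)) ≤
      2 * x * (-σ * x + σ * y - μ₁ * (u₁ - x)) +
      2 * y * (-σ * x - y - x * z - μ₂ * (u₂ - y)) +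
      2 * z * (-b * z + x * y - b * (ρ + σ)) := by
  linarith [mul_nonneg (sub_nonneg.mpr hc₁) (sq_nonneg x),
    mul_nonneg (sub_nonneg.mpr hc₂) (sq_nonneg y), mul_nonneg (sub_nonneg.mpr hc₃) (sq_nonneg z),
    mul_nonneg hμ₁ (sq_nonneg (x - u₁)), mul_nonneg hμ₂ (sq_nonneg (y - u₂)),
    mul_nonneg hb (sq_nonneg (z - (ρ + σ))),
    mul_nonneg hμ₁ (sub_nonneg.mpr hu₁), mul_nonneg hμ₂ (sub_nonneg.mpr hu₂)]

theorem lorenz_backward_nudged_energy_bound_general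
    (σ b ρ : ℝ) (hb : 0 < b)
    (μ₁' μ₂' : ℝ) (hμ₁ : 0 ≤ μ₁') (hμ₂ : 0 ≤ μ₂')
    (T K : ℝ)
    (u₁ u₂ u₃ w₁ w₂ w₃ : ℝ → ℝ)
    (hu : ∀ t ∈ Set.Icc (0 : ℝ) T, u₁ t ^ 2 + u₂ t ^ 2 + u₃ t ^ 2 ≤ K ^ 2)
    (hw₁ : ∀ t ∈ Set.Icc (0 : ℝ) T,
      HasDerivAt w₁ (-σ * w₁ t + σ * w₂ t - μ₁' * (u₁ t - w₁ t)) t)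
    (hw₂ : ∀ t ∈ Set.Icc (0 : ℝ) T,
      HasDerivAt w₂ (-σ * w₁ t - w₂ t - w₁ t * w₃ t - μ₂' * (u₂ t - w₂ t)) t)
    (hw₃ : ∀ t ∈ Set.Icc (0 : ℝ) T,
      HasDerivAt w₃ (-b * w₃ t + w₁ t * w₂ t - b * (ρ + σ)) t) :
    ∀ t ∈ Set.Icc (0 : ℝ) T,
      w₁ t ^ 2 + w₂ t ^ 2 + w₃ t ^ 2 ≤
        Real.exp (max (2 * σ - μ₁') (max (2 - μ₂') (3 * b)) * (T - t)) *
            (w₁ T ^ 2 + w₂ T ^ 2 + w₃ T ^ 2)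
          + (b * (ρ + σ) ^ 2 + (μ₁' + μ₂') * K ^ 2)
              / max (2 * σ - μ₁') (max (2 - μ₂') (3 * b))
            * Real.exp (max (2 * σ - μ₁') (max (2 - μ₂') (3 * b)) * T) := by
  set c := max (2 * σ - μ₁') (max (2 - μ₂') (3 * b))
  set D := b * (ρ + σ) ^ 2 + (μ₁' + μ₂') * K ^ 2
  have hc₃ : 3 * b ≤ c := le_max_of_le_right (le_max_right _ _)
  have hc : 0 < c := by linarith
  have hE : ∀ t ∈ Icc 0 T, HasDerivAt (fun s ↦ w₁ s ^ 2 + w₂ s ^ 2 + w₃ s ^ 2)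
      (2 * w₁ t * (-σ * w₁ t + σ * w₂ t - μ₁' * (u₁ t - w₁ t)) +
        2 * w₂ t * (-σ * w₁ t - w₂ t - w₁ t * w₃ t - μ₂' * (u₂ t - w₂ t)) +
        2 * w₃ t * (-b * w₃ t + w₁ t * w₂ t - b * (ρ + σ))) t := fun t ht ↦
    ((((hw₁ t ht).pow 2).add ((hw₂ t ht).pow 2)).add ((hw₃ t ht).pow 2)).congr_deriv (by ring)
  have hgronwall := add_div_le_exp_mul_of_deriv_ge (D := D) hc.ne' hE fun t ht ↦ by
    have hut := hu t ht
    exact lorenz_backward_energy_rate_ge hb.le hμ₁ hμ₂ (le_max_left _ _)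
      (le_max_of_le_right (le_max_left _ _)) hc₃
      (by linarith [sq_nonneg (u₂ t), sq_nonneg (u₃ t)])
      (by linarith [sq_nonneg (u₁ t), sq_nonneg (u₃ t)])
  intro t ht
  have hDc : 0 ≤ D / c := by positivity
  have hexp : exp (c * (T - t)) ≤ exp (c * T) := exp_le_exp.mpr (by nlinarith [ht.1])
  linarith [hgronwall t ht, mul_le_mul_of_nonneg_left hexp hDc]

/-- energy bound for the backward-nudged Lorenz system, solved
backward from the terminal time `T`. -/
theorem lorenz_backward_nudged_energy_bound
    (σ b ρ : ℝ) (hσ : 0 < σ) (hb : 0 < b) (hρ : 0 < ρ)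
    (μ₁' μ₂' : ℝ) (hμ₁ : 0 ≤ μ₁') (hμ₂ : 0 ≤ μ₂')
    (T K : ℝ) (hT : 0 ≤ T) (hK : 0 ≤ K)
    (u₁ u₂ u₃ w₁ w₂ w₃ : ℝ → ℝ)
    (hu_cont : Continuous u₁ ∧ Continuous u₂ ∧ Continuous u₃)
    (hu : ∀ t ∈ Set.Icc (0 : ℝ) T, u₁ t ^ 2 + u₂ t ^ 2 + u₃ t ^ 2 ≤ K ^ 2)
    (hw₁ : ∀ t ∈ Set.Icc (0 : ℝ) T,
      HasDerivAt w₁ (-σ * w₁ t + σ * w₂ t - μ₁' * (u₁ t - w₁ t)) t)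
    (hw₂ : ∀ t ∈ Set.Icc (0 : ℝ) T,
      HasDerivAt w₂ (-σ * w₁ t - w₂ t - w₁ t * w₃ t - μ₂' * (u₂ t - w₂ t)) t)
    (hw₃ : ∀ t ∈ Set.Icc (0 : ℝ) T,
      HasDerivAt w₃ (-b * w₃ t + w₁ t * w₂ t - b * (ρ + σ)) t) :
    ∀ t ∈ Set.Icc (0 : ℝ) T,
      w₁ t ^ 2 + w₂ t ^ 2 + w₃ t ^ 2 ≤
        Real.exp (max (2 * σ - μ₁') (max (2 - μ₂') (3 * b)) * (T - t)) *
            (w₁ T ^ 2 + w₂ T ^ 2 + w₃ T ^ 2)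
          + (b * (ρ + σ) ^ 2 + (μ₁' + μ₂') * K ^ 2)
              / max (2 * σ - μ₁') (max (2 - μ₂') (3 * b))
            * Real.exp (max (2 * σ - μ₁') (max (2 - μ₂') (3 * b)) * T) :=
  lorenz_backward_nudged_energy_bound_general σ b ρ hb μ₁' μ₂' hμ₁ hμ₂ T K u₁ u₂ u₃ w₁ w₂ w₃ hu hw₁
    hw₂ hw₃
end
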